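/- Let n ≥ 4, let (X,d) be a metric space, and let P_n = {0,1,...,n} carry the absolute value metric. Let f: P_n → X satisfy λ|x−y| ≤ d(f(x),f(y)) ≤ λK|x−y| for all x,y ∈ P_n, for some λ > 0 and K ≥ 1. For each i define L_i := sup{ d(f(x),f(y))/(λ·2^i) : x,y ∈ P_n, |x−y| = 2^i }. Then there exist i ∈ {0,1,...,⌊log₂ n⌋ − 1} and v ∈ P_n with v + 2^{i+1} ≤ n such that, setting Z = {v, v+2^i, v+2^{i+1}}, every pair x,y ∈ Z satisfies λ·L_{i+1}·(1 − K/(⌊log₂ n⌋·L_{i+1}))·|x−y| ≤ d(f(x),f(y)) ≤ λ·L_{i+1}·(1 + K/(⌊log₂ n⌋·L_{i+1}))·|x−y|. Moreover, if n ≥ 2^{⌈2CK^p⌉} for some p ≥ 1 and C ≥ 1, then in addition λ·L_{i+1}·(1 − 1/(2C·L_{i+1}^p))·|x−y| ≤ d(f(x),f(y)) ≤ λ·L_{i+1}·(1 + 1/(2C·L_{i+1}^p))·|x−y| for all x,y ∈ Z, and the distortion of f restricted to Z is at most 1 + 2/(C·L_{i+1}^p). -/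

import Mathlib

/-- The scaled Lipschitz constants `L_i` of a map `f` on the path `P_n = {0,...,n}`:
`L_i = sup { d(f(x),f(y)) / (λ·2^i) : x, y ∈ P_n, |x − y| = 2^i }`. -/
noncomputable def pathL {X : Type*} [MetricSpace X] (n : ℕ) (f : ℕ → X) (lam : ℝ)
    (i : ℕ) : ℝ :=
  sSup {r : ℝ | ∃ x y : ℕ, x ≤ n ∧ y ≤ n ∧ y = x + 2 ^ i ∧
    r = dist (f x) (f y) / (lam * 2 ^ i)}

/-- The distortion of `f` restricted to a subset `Z` of the path `P_n`:
`dist(f|_Z) = sup_{x≠y∈Z} [d(f(x),f(y)) / |x−y|] · sup_{x≠y∈Z} [|x−y| / d(f(x),f(y))]`. -/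
noncomputable def distortionOn {X : Type*} [MetricSpace X] (f : ℕ → X) (Z : Set ℕ) : ℝ :=
  sSup {r : ℝ | ∃ x ∈ Z, ∃ y ∈ Z, x ≠ y ∧ r = dist (f x) (f y) / |(x : ℝ) - (y : ℝ)|} *
    sSup {r : ℝ | ∃ x ∈ Z, ∃ y ∈ Z, x ≠ y ∧ r = |(x : ℝ) - (y : ℝ)| / dist (f x) (f y)}

private lemma aux_ratio (lam L e : ℝ) (hlam : 0 < lam) (hL : 0 < L)
    (he0 : 0 < e) (he2 : e ≤ 1/2) :
    lam * (L + L * e) ≤ (1 + 4 * e) * (lam * (L - L * e)) := by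
  nlinarith [mul_nonneg (mul_nonneg (mul_pos hlam hL).le he0.le)
    (by linarith : (0:ℝ) ≤ 1 - 2 * e)]

set_option maxHeartbeats 1000000 in
/-- **Path Lemma.**  Let `n ≥ 4` and let `f : P_n → X` satisfy
`λ|x−y| ≤ d(f(x),f(y)) ≤ λK|x−y|`.  Then there are `i < ⌊log₂ n⌋` and `v ∈ P_n` with
`v + 2^{i+1} ≤ n` such that on `Z = {v, v+2^i, v+2^{i+1}}` the map `f` is a
`(1 ± K/(⌊log₂ n⌋·L_{i+1}))`-approximate scaled isometry with scale `λ·L_{i+1}`; moreover,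
if `n ≥ 2^{⌈2CK^p⌉}` for some `p ≥ 1`, `C ≥ 1`, the error improves to `1/(2C·L_{i+1}^p)`
and `dist(f|_Z) ≤ 1 + 2/(C·L_{i+1}^p)`. -/
theorem path_lemma {X : Type*} [MetricSpace X] (n : ℕ) (hn : 4 ≤ n) (f : ℕ → X)
    (lam K : ℝ) (hlam : 0 < lam) (hK : 1 ≤ K)
    (hf : ∀ x y : ℕ, x ≤ n → y ≤ n →
      lam * |(x : ℝ) - (y : ℝ)| ≤ dist (f x) (f y) ∧
      dist (f x) (f y) ≤ lam * K * |(x : ℝ) - (y : ℝ)|) :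
    ∃ i < Nat.log 2 n, ∃ v : ℕ, v + 2 ^ (i + 1) ≤ n ∧
      (∀ x ∈ ({v, v + 2 ^ i, v + 2 ^ (i + 1)} : Set ℕ),
       ∀ y ∈ ({v, v + 2 ^ i, v + 2 ^ (i + 1)} : Set ℕ),
        lam * pathL n f lam (i + 1) * (1 - K / ((Nat.log 2 n : ℝ) * pathL n f lam (i + 1)))
            * |(x : ℝ) - (y : ℝ)| ≤ dist (f x) (f y) ∧
        dist (f x) (f y) ≤
          lam * pathL n f lam (i + 1) * (1 + K / ((Nat.log 2 n : ℝ) * pathL n f lam (i + 1)))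
            * |(x : ℝ) - (y : ℝ)|) ∧
      ∀ p C : ℝ, 1 ≤ p → 1 ≤ C → (2 : ℝ) ^ (⌈2 * C * K ^ p⌉₊ : ℕ) ≤ (n : ℝ) →
        (∀ x ∈ ({v, v + 2 ^ i, v + 2 ^ (i + 1)} : Set ℕ),
         ∀ y ∈ ({v, v + 2 ^ i, v + 2 ^ (i + 1)} : Set ℕ),
          lam * pathL n f lam (i + 1) * (1 - 1 / (2 * C * pathL n f lam (i + 1) ^ p))
              * |(x : ℝ) - (y : ℝ)| ≤ dist (f x) (f y) ∧
          dist (f x) (f y) ≤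
            lam * pathL n f lam (i + 1) * (1 + 1 / (2 * C * pathL n f lam (i + 1) ^ p))
              * |(x : ℝ) - (y : ℝ)|) ∧
        distortionOn f ({v, v + 2 ^ i, v + 2 ^ (i + 1)} : Set ℕ) ≤
          1 + 2 / (C * pathL n f lam (i + 1) ^ p) := by
  classical
  set m := Nat.log 2 n with hm_def
  have hm2 : 2 ≤ m := by
    rw [hm_def]
    exact (Nat.le_log_iff_pow_le (by norm_num) (by omega)).2 (by simpa using hn)
  have hmR : (0:ℝ) < (m:ℝ) := by exact_mod_cast Nat.pos_of_ne_zero (by omega)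
  have hK0 : (0:ℝ) < K := by linarith
  have hpow_le : ∀ j ≤ m, 2 ^ j ≤ n := fun j hj =>
    le_trans (Nat.pow_le_pow_right (by norm_num) hj) (Nat.pow_log_le_self 2 (by omega))
  have habs : ∀ (x k : ℕ), |(x:ℝ) - ((x + k : ℕ):ℝ)| = (k:ℝ) := by
    intro x k
    push_cast
    rw [abs_sub_comm, add_sub_cancel_left]
    exact abs_of_nonneg (by positivity)
  have hd_low : ∀ x k : ℕ, x + k ≤ n → lam * (k:ℝ) ≤ dist (f x) (f (x+k)) := by
    intro x k hxk
    have h := (hf x (x+k) (by omega) hxk).1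
    rwa [habs] at h
  have hd_up : ∀ x k : ℕ, x + k ≤ n → dist (f x) (f (x+k)) ≤ lam * K * (k:ℝ) := by
    intro x k hxk
    have h := (hf x (x+k) (by omega) hxk).2
    rwa [habs] at h
  set S : ℕ → Set ℝ := fun j => {r : ℝ | ∃ x y : ℕ, x ≤ n ∧ y ≤ n ∧ y = x + 2 ^ j ∧
    r = dist (f x) (f y) / (lam * 2 ^ j)} with hS_def
  have hPL : ∀ j, pathL n f lam j = sSup (S j) := fun j => rfl
  have hmem : ∀ (j x : ℕ), x + 2 ^ j ≤ n →
      dist (f x) (f (x + 2 ^ j)) / (lam * 2 ^ j) ∈ S j :=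
    fun j x hx => ⟨x, x + 2 ^ j, le_trans (Nat.le_add_right _ _) hx, hx, rfl, rfl⟩
  have helem : ∀ j, ∀ r ∈ S j, 1 ≤ r ∧ r ≤ K := by
    intro j r hr
    obtain ⟨x, y, hx, hy, rfl, rfl⟩ := hr
    have h1 := hd_low x (2 ^ j) hy
    have h2 := hd_up x (2 ^ j) hy
    have hpos : (0:ℝ) < lam * 2 ^ j := by positivity
    have hc : ((2 ^ j : ℕ) : ℝ) = (2:ℝ) ^ j := by push_cast; ring
    rw [hc] at h1 h2
    constructor
    · rw [le_div_iff₀ hpos]; linarith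
    · rw [div_le_iff₀ hpos]; nlinarith
  have hbdd : ∀ j, BddAbove (S j) := fun j => ⟨K, fun r hr => (helem j r hr).2⟩
  have hne : ∀ j, 2 ^ j ≤ n → (S j).Nonempty := by
    intro j hj
    exact ⟨_, hmem j 0 (by simpa using hj)⟩
  have hLK : ∀ j, 2 ^ j ≤ n → sSup (S j) ≤ K :=
    fun j hj => csSup_le (hne j hj) (fun r hr => (helem j r hr).2)
  have hL1 : ∀ j, 2 ^ j ≤ n → 1 ≤ sSup (S j) := by
    intro j hj
    have hm0 := hmem j 0 (by simpa using hj)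
    exact le_trans (helem j _ hm0).1 (le_csSup (hbdd j) hm0)
  have hdistL : ∀ (j x : ℕ), x + 2 ^ j ≤ n →
      dist (f x) (f (x + 2 ^ j)) ≤ lam * 2 ^ j * sSup (S j) := by
    intro j x hx
    have h := le_csSup (hbdd j) (hmem j x hx)
    have hpos : (0:ℝ) < lam * 2 ^ j := by positivity
    rw [div_le_iff₀ hpos] at h
    nlinarith
  have hsplit : ∀ j : ℕ, (2:ℕ) ^ (j+1) = 2 ^ j + 2 ^ j := by
    intro j; rw [pow_succ]; omega
  have hmono : ∀ j, 2 ^ (j+1) ≤ n → sSup (S (j+1)) ≤ sSup (S j) := by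
    intro j hj
    apply csSup_le (hne (j+1) hj)
    rintro r ⟨x, y, hx, hy, rfl, rfl⟩
    have hs := hsplit j
    have h1 : dist (f x) (f (x + 2 ^ j)) ≤ lam * 2 ^ j * sSup (S j) :=
      hdistL j x (by omega)
    have h2 : dist (f (x + 2 ^ j)) (f ((x + 2 ^ j) + 2 ^ j)) ≤ lam * 2 ^ j * sSup (S j) :=
      hdistL j (x + 2 ^ j) (by omega)
    have hc : (x + 2 ^ j) + 2 ^ j = x + 2 ^ (j+1) := by omega
    rw [hc] at h2
    have htri := dist_triangle (f x) (f (x + 2 ^ j)) (f (x + 2 ^ (j+1)))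
    have hpos : (0:ℝ) < lam * 2 ^ (j+1) := by positivity
    rw [div_le_iff₀ hpos]
    have he : sSup (S j) * (lam * 2 ^ (j+1)) =
        lam * 2 ^ j * sSup (S j) + lam * 2 ^ j * sSup (S j) := by ring
    linarith
  -- pigeonhole
  have hsum_le : ∑ j ∈ Finset.range m, (sSup (S j) - sSup (S (j+1))) ≤
      ∑ j ∈ Finset.range m, K / (m:ℝ) := by
    rw [Finset.sum_range_sub' (fun j => sSup (S j)) m, Finset.sum_const, Finset.card_range,
      nsmul_eq_mul]
    have he : (m:ℝ) * (K / m) = K := by field_simp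
    rw [he]
    have h0 := hLK 0 (hpow_le 0 (by omega))
    have h1 := hL1 m (hpow_le m le_rfl)
    linarith
  obtain ⟨i, hi_mem, hgap⟩ :=
    Finset.exists_le_of_sum_le (Finset.nonempty_range_iff.2 (by omega)) hsum_le
  have hi : i < m := Finset.mem_range.1 hi_mem
  have hi1 : 2 ^ (i+1) ≤ n := hpow_le (i+1) hi
  have hii : 2 ^ i ≤ n := hpow_le i (by omega)
  -- attain the sup
  have hfin : (S (i+1)).Finite := by
    apply Set.Finite.subset ((Set.finite_Iic n).image
      (fun x => dist (f x) (f (x + 2 ^ (i+1))) / (lam * 2 ^ (i+1))))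
    rintro r ⟨x, y, hx, hy, rfl, rfl⟩
    exact ⟨x, hx, rfl⟩
  obtain ⟨v, y, hv, hvn, rfl, hLeq⟩ := (hne (i+1) hi1).csSup_mem hfin
  set L := sSup (S (i+1)) with hL_def
  set Li := sSup (S i) with hLi_def
  have hL1' : 1 ≤ L := hL1 (i+1) hi1
  have hLpos : (0:ℝ) < L := by linarith
  have hLle : L ≤ K := hLK (i+1) hi1
  have hg0 : 0 ≤ Li - L := by have := hmono i hi1; linarith
  have hgK : Li - L ≤ K / m := hgap
  have hp1 : (0:ℝ) < lam * 2 ^ i := by positivity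
  have hp2 : (0:ℝ) < lam * 2 ^ (i+1) := by positivity
  -- distance facts
  have hLeq' : dist (f v) (f (v + 2 ^ (i+1))) / (lam * 2 ^ (i+1)) = L := by
    linarith [hLeq]
  have hD : dist (f v) (f (v + 2 ^ (i+1))) = lam * 2 ^ i * (2 * L) := by
    rw [div_eq_iff (ne_of_gt hp2)] at hLeq'
    rw [hLeq']; ring
  have hA_ub : dist (f v) (f (v + 2 ^ i)) ≤ lam * 2 ^ i * Li :=
    hdistL i v (by have := hsplit i; omega)
  have hB_ub : dist (f (v + 2 ^ i)) (f (v + 2 ^ (i+1))) ≤ lam * 2 ^ i * Li := by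
    have h := hdistL i (v + 2 ^ i) (by have := hsplit i; omega)
    have hc : (v + 2 ^ i) + 2 ^ i = v + 2 ^ (i+1) := by have := hsplit i; omega
    rwa [hc] at h
  have htriA := dist_triangle (f v) (f (v + 2 ^ i)) (f (v + 2 ^ (i+1)))
  have hA_lb : lam * 2 ^ i * (2 * L - Li) ≤ dist (f v) (f (v + 2 ^ i)) := by linarith
  have hB_lb : lam * 2 ^ i * (2 * L - Li) ≤ dist (f (v + 2 ^ i)) (f (v + 2 ^ (i+1))) := by
    linarith
  -- abs casts
  have ha1 : |(v:ℝ) - ((v + 2 ^ i : ℕ):ℝ)| = (2:ℝ) ^ i := by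
    rw [habs]; push_cast; ring
  have ha2 : |(v:ℝ) - ((v + 2 ^ (i+1) : ℕ):ℝ)| = 2 * (2:ℝ) ^ i := by
    rw [habs]; push_cast; ring
  have ha3 : |((v + 2 ^ i : ℕ):ℝ) - ((v + 2 ^ (i+1) : ℕ):ℝ)| = (2:ℝ) ^ i := by
    have hc : v + 2 ^ (i+1) = (v + 2 ^ i) + 2 ^ i := by have := hsplit i; omega
    rw [hc, habs]; push_cast; ring
  have ha1' : |((v + 2 ^ i : ℕ):ℝ) - (v:ℝ)| = (2:ℝ) ^ i := by rw [abs_sub_comm]; exact ha1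
  have ha2' : |((v + 2 ^ (i+1) : ℕ):ℝ) - (v:ℝ)| = 2 * (2:ℝ) ^ i := by
    rw [abs_sub_comm]; exact ha2
  have ha3' : |((v + 2 ^ (i+1) : ℕ):ℝ) - ((v + 2 ^ i : ℕ):ℝ)| = (2:ℝ) ^ i := by
    rw [abs_sub_comm]; exact ha3
  have hc1 : dist (f (v + 2 ^ i)) (f v) = dist (f v) (f (v + 2 ^ i)) := dist_comm _ _
  have hc2 : dist (f (v + 2 ^ (i+1))) (f v) = dist (f v) (f (v + 2 ^ (i+1))) := dist_comm _ _
  have hc3 : dist (f (v + 2 ^ (i+1))) (f (v + 2 ^ i)) =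
      dist (f (v + 2 ^ i)) (f (v + 2 ^ (i+1))) := dist_comm _ _
  -- the key triple bound
  have key : ∀ t : ℝ, Li - L ≤ t →
      ∀ x ∈ ({v, v + 2 ^ i, v + 2 ^ (i + 1)} : Set ℕ),
      ∀ y ∈ ({v, v + 2 ^ i, v + 2 ^ (i + 1)} : Set ℕ),
      lam * (L - t) * |(x:ℝ) - (y:ℝ)| ≤ dist (f x) (f y) ∧
      dist (f x) (f y) ≤ lam * (L + t) * |(x:ℝ) - (y:ℝ)| := by
    intro t ht x hx y hy
    have ht0 : 0 ≤ t := le_trans hg0 ht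
    have hmul1 : 0 ≤ lam * 2 ^ i * (t - (Li - L)) := mul_nonneg hp1.le (by linarith)
    have hmul3 : 0 ≤ lam * 2 ^ i * t := mul_nonneg hp1.le ht0
    simp only [Set.mem_insert_iff, Set.mem_singleton_iff] at hx hy
    rcases hx with rfl | rfl | rfl <;> rcases hy with rfl | rfl | rfl <;>
      simp only [sub_self, abs_zero, dist_self, ha1, ha2, ha3, ha1', ha2', ha3',
        hc1, hc2, hc3, mul_zero] <;>
      constructor <;>
      linarith [hA_ub, hA_lb, hB_ub, hB_lb, hD, hmul1, hmul3]
  refine ⟨i, hi, v, hvn, ?_, ?_⟩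
  · -- part 1
    intro x hx y hy
    have hcm : (m:ℝ) ≠ 0 := ne_of_gt hmR
    have hcL : L ≠ 0 := ne_of_gt hLpos
    have hco1 : lam * L * (1 - K / ((m:ℝ) * L)) = lam * (L - K / (m:ℝ)) := by
      field_simp
    have hco2 : lam * L * (1 + K / ((m:ℝ) * L)) = lam * (L + K / (m:ℝ)) := by
      field_simp
    have h := key (K / (m:ℝ)) hgK x hx y hy
    simp only [hPL, ← hL_def]
    rw [hco1, hco2]
    exact h
  · -- part 2
    intro p C hp hC hnp
    have hp0 : (0:ℝ) ≤ p - 1 := by linarith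
    have hC0 : (0:ℝ) < C := by linarith
    have hLp1 : 1 ≤ L ^ p := Real.one_le_rpow hL1' (by linarith)
    have hLp_pos : (0:ℝ) < L ^ p := by linarith
    have hKp1 : 1 ≤ K ^ p := Real.one_le_rpow hK (by linarith)
    have hmge : 2 * C * K ^ p ≤ (m:ℝ) := by
      have h1 : (2:ℕ) ^ (⌈2 * C * K ^ p⌉₊) ≤ n := by exact_mod_cast hnp
      have h2 : ⌈2 * C * K ^ p⌉₊ ≤ m :=
        (Nat.le_log_iff_pow_le (by norm_num) (by omega)).2 h1
      calc 2 * C * K ^ p ≤ (⌈2 * C * K ^ p⌉₊ : ℝ) := Nat.le_ceil _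
        _ ≤ (m:ℝ) := by exact_mod_cast h2
    have hcore : K * L ^ p ≤ L * K ^ p := by
      have h1 : L ^ (p-1) ≤ K ^ (p-1) := Real.rpow_le_rpow hLpos.le hLle hp0
      have e1 : L ^ p = L ^ (p-1) * L := by
        have h := Real.rpow_add_one (ne_of_gt hLpos) (p-1)
        rwa [sub_add_cancel] at h
      have e2 : K ^ p = K ^ (p-1) * K := by
        have h := Real.rpow_add_one (ne_of_gt hK0) (p-1)
        rwa [sub_add_cancel] at h
      have h2 : (0:ℝ) ≤ L ^ (p-1) := Real.rpow_nonneg hLpos.le _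
      rw [e1, e2]
      nlinarith [mul_nonneg (mul_pos hK0 hLpos).le (sub_nonneg.2 h1)]
    have ht2 : Li - L ≤ L / (2 * C * L ^ p) := by
      refine le_trans hgK ?_
      rw [div_le_div_iff₀ hmR (by positivity)]
      nlinarith [mul_le_mul_of_nonneg_left hmge hLpos.le,
        mul_le_mul_of_nonneg_left hcore (by linarith : (0:ℝ) ≤ 2 * C)]
    have key2 := key (L / (2 * C * L ^ p)) ht2
    have hco1 : lam * L * (1 - 1 / (2 * C * L ^ p)) =
        lam * (L - L / (2 * C * L ^ p)) := by ring
    have hco2 : lam * L * (1 + 1 / (2 * C * L ^ p)) =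
        lam * (L + L / (2 * C * L ^ p)) := by ring
    have h2C : (2:ℝ) ≤ 2 * C * L ^ p := by
      nlinarith [mul_le_mul_of_nonneg_left hLp1 hC0.le]
    have hE_le : L / (2 * C * L ^ p) ≤ L / 2 := by
      rw [div_le_div_iff₀ (by positivity) (by norm_num)]
      nlinarith [mul_le_mul_of_nonneg_left h2C hLpos.le]
    have hE_pos : 0 < L / (2 * C * L ^ p) := by positivity
    have hc1pos : 0 < lam * (L - L / (2 * C * L ^ p)) := by
      apply mul_pos hlam; linarith
    have hc2pos : 0 < lam * (L + L / (2 * C * L ^ p)) := by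
      apply mul_pos hlam; linarith
    refine ⟨?_, ?_⟩
    · intro x hx y hy
      have h := key2 x hx y hy
      simp only [hPL, ← hL_def]
      rw [hco1, hco2]
      exact h
    · -- distortion bound
      have hvne : v ≠ v + 2 ^ i := by have := Nat.two_pow_pos i; omega
      have hvmem : v ∈ ({v, v + 2 ^ i, v + 2 ^ (i + 1)} : Set ℕ) := Or.inl rfl
      have hbmem : v + 2 ^ i ∈ ({v, v + 2 ^ i, v + 2 ^ (i + 1)} : Set ℕ) := Or.inr (Or.inl rfl)
      have habspos : ∀ x y : ℕ, x ≠ y → (0:ℝ) < |(x:ℝ) - (y:ℝ)| := by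
        intro x y hxy
        rw [abs_pos, sub_ne_zero]
        exact_mod_cast hxy
      set T1 : Set ℝ := {r : ℝ | ∃ x ∈ ({v, v + 2 ^ i, v + 2 ^ (i + 1)} : Set ℕ),
          ∃ y ∈ ({v, v + 2 ^ i, v + 2 ^ (i + 1)} : Set ℕ), x ≠ y ∧
          r = dist (f x) (f y) / |(x : ℝ) - (y : ℝ)|} with hT1_def
      set T2 : Set ℝ := {r : ℝ | ∃ x ∈ ({v, v + 2 ^ i, v + 2 ^ (i + 1)} : Set ℕ),
          ∃ y ∈ ({v, v + 2 ^ i, v + 2 ^ (i + 1)} : Set ℕ), x ≠ y ∧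
          r = |(x : ℝ) - (y : ℝ)| / dist (f x) (f y)} with hT2_def
      have hel1 : dist (f v) (f (v + 2 ^ i)) / |(v : ℝ) - ((v + 2 ^ i : ℕ) : ℝ)| ∈ T1 :=
        ⟨v, hvmem, v + 2 ^ i, hbmem, hvne, rfl⟩
      have hel2 : |(v : ℝ) - ((v + 2 ^ i : ℕ) : ℝ)| / dist (f v) (f (v + 2 ^ i)) ∈ T2 :=
        ⟨v, hvmem, v + 2 ^ i, hbmem, hvne, rfl⟩
      have hT1 : sSup T1 ≤ lam * (L + L / (2 * C * L ^ p)) := by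
        refine csSup_le ⟨_, hel1⟩ ?_
        rintro r ⟨x, hx, y, hy, hxy, rfl⟩
        rw [div_le_iff₀ (habspos x y hxy)]
        exact (key2 x hx y hy).2
      have hT2elem : ∀ r ∈ T2, r ≤ 1 / (lam * (L - L / (2 * C * L ^ p))) := by
        rintro r ⟨x, hx, y, hy, hxy, rfl⟩
        have hlow := (key2 x hx y hy).1
        have hdpos : 0 < dist (f x) (f y) :=
          lt_of_lt_of_le (mul_pos hc1pos (habspos x y hxy)) hlow
        rw [div_le_div_iff₀ hdpos hc1pos]
        linarith [hlow]
      have hT2 : sSup T2 ≤ 1 / (lam * (L - L / (2 * C * L ^ p))) :=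
        csSup_le ⟨_, hel2⟩ hT2elem
      have hT2nn : 0 ≤ sSup T2 :=
        le_trans (by positivity) (le_csSup ⟨_, hT2elem⟩ hel2)
      have hmain : (lam * (L + L / (2 * C * L ^ p))) *
          (1 / (lam * (L - L / (2 * C * L ^ p)))) ≤ 1 + 2 / (C * L ^ p) := by
        have he0 : (0:ℝ) < 1 / (2 * C * L ^ p) := by positivity
        have he2 : 1 / (2 * C * L ^ p) ≤ 1 / 2 := by
          rw [div_le_div_iff₀ (by positivity) (by norm_num)]
          linarith
        have h24 : 2 / (C * L ^ p) = 4 * (1 / (2 * C * L ^ p)) := by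
          field_simp; ring
        have hdd : L / (2 * C * L ^ p) = L * (1 / (2 * C * L ^ p)) := by ring
        rw [h24, mul_one_div, div_le_iff₀ hc1pos, hdd]
        exact aux_ratio lam L _ hlam hLpos he0 he2
      have hgoal := le_trans (mul_le_mul hT1 hT2 hT2nn hc2pos.le) hmain
      simp only [distortionOn, hPL, ← hL_def, ← hT1_def, ← hT2_def]
      exact hgoal
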